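/- arXiv:2605.26671 — 9 statements merged into one kernel-verified Lean document; each statement's English description precedes it below -/
import Mathlib

section
/- Let F be a finite set of points of a metric space, u a point, k a natural number, q ∈ F, and let S be a k-nearest-neighbor set of u in F. Then q ∈ S if and only if the number of elements a ∈ F with a ≠ q and dist(u, a) < dist(u, q) is strictly less than k. -/
open scoped Classical

def IsKNNSet {X : Type*} [MetricSpace X] (F : Finset X) (u : X) (k : ℕ)
    (S : Finset X) : Prop :=
  S ⊆ F ∧ S.card = k ∧ ∀ s ∈ S, ∀ a ∈ F, a ∉ S → dist u s < dist u a

namespace Finset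

variable {α β : Type*} [LinearOrder β] {f : α → β} {F S : Finset α} {q : α}

theorem filter_lt_subset_erase (hsep : ∀ s ∈ S, ∀ a ∈ F, a ∉ S → f s < f a) (hqS : q ∈ S) :
    (F.filter fun a => a ≠ q ∧ f a < f q) ⊆ S.erase q := by
  intro a ha
  obtain ⟨haF, hne, hlt⟩ := mem_filter.1 ha
  refine mem_erase.2 ⟨hne, ?_⟩
  by_contra haS
  exact (hsep q hqS a haF haS).not_gt hlt

theorem subset_filter_lt (hSF : S ⊆ F) (hsep : ∀ s ∈ S, ∀ a ∈ F, a ∉ S → f s < f a)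
    (hq : q ∈ F) (hqS : q ∉ S) :
    S ⊆ F.filter fun a => a ≠ q ∧ f a < f q :=
  fun s hs => mem_filter.2 ⟨hSF hs, ne_of_mem_of_not_mem hs hqS, hsep s hs q hq hqS⟩

theorem mem_iff_card_filter_lt_card (hSF : S ⊆ F)
    (hsep : ∀ s ∈ S, ∀ a ∈ F, a ∉ S → f s < f a) (hq : q ∈ F) :
    q ∈ S ↔ (F.filter fun a => a ≠ q ∧ f a < f q).card < S.card := by
  constructor
  · intro hqS
    calc (F.filter fun a => a ≠ q ∧ f a < f q).card
        ≤ (S.erase q).card := card_le_card (filter_lt_subset_erase hsep hqS)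
      _ < S.card := card_erase_lt_of_mem hqS
  · intro hcard
    by_contra hqS
    exact hcard.not_ge (card_le_card (subset_filter_lt hSF hsep hq hqS))

end Finset

/-- Distance-rank characterization of RkNN membership: `q` belongs to a `k`-nearest
neighbor set of `u` in `F` iff fewer than `k` elements of `F` other than `q` are
strictly closer to `u` than `q` is. -/
theorem stmt_0 {X : Type*} [MetricSpace X] (F : Finset X) (u : X) (k : ℕ)
    (q : X) (hq : q ∈ F) (S : Finset X) (hS : IsKNNSet F u k S) :
    q ∈ S ↔ (F.filter fun a => a ≠ q ∧ dist u a < dist u q).card < k := by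
  obtain ⟨hSF, rfl, hsep⟩ := hS
  exact Finset.mem_iff_card_filter_lt_card hSF hsep hq
end

section
/- Work in the Euclidean plane ℝ² and in ℝ³. Let F be a finite set of points of ℝ², q ∈ F, k a natural number, and let R = [x₀, x₁] × [y₀, y₁] be an axis-aligned rectangle with x₀ < x₁ and y₀ < y₁. Let u ∈ R be a point with dist(u, a) ≠ dist(u, q) for every a ∈ F \ {q}. Suppose that for every a ∈ F \ {q} there are given: a vertex v_a of R, the two vertices w_a and w'_a of R adjacent to v_a, and points p_a on the segment from v_a to w_a and p'_a on the segment from v_a to w'_a, such that dist(p_a, a) = dist(p_a, q), dist(p'_a, a) = dist(p'_a, q), dist(v_a, a) < dist(v_a, q), dist(w_a, a) ≥ dist(w_a, q), and dist(w'_a, a) ≥ dist(w'_a, q). Fix z > 0 and for each a ∈ F \ {q} a height h_a with 0 < h_a < z, and define the occluder O_a = {(x, y, h_a) : (x, y) ∈ convexHull {v_a, p_a, p'_a}} ⊆ ℝ³. Let the ray of u be the set {(u₁, u₂, z − t) : t ∈ [0, z]}. Then the number of a ∈ F \ {q} whose occluder O_a meets the ray of u equals the number of a ∈ F \ {q} with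 dist(u, a) < dist(u, q); consequently, u is a reverse k-nearest neighbor of q (i.e. fewer than k elements a ∈ F \ {q} satisfy dist(u, a) < dist(u, q)) if and only if the ray of u meets fewer than k of the occluders O_a. -/
/-!
For a competitor `a`, the function `g x = dist x a ^ 2 - dist x q ^ 2` is affine, negative at the
corner `v` and zero at the bisector points `p ∈ [v, w]`, `p' ∈ [v, w']`. Hence
`p - v = β • (w - v)` and `p' - v = γ • (w' - v)` with `β, γ > 0`, so every point of the rectangle
is `u = v + s • (p - v) + t • (p' - v)` with `s, t ≥ 0`, and `g u = (1 - s - t) * g v`. Thus `u`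
lies in the triangle `v p p'` (that is, `s + t ≤ 1`) iff `g u ≤ 0`, iff `u` is strictly closer
to `a` than to `q`, ties being excluded. The ray of `u` meets the triangle lifted to a height in
`[0, z]` iff `u` lies in the triangle, so the two counts agree facility by facility.
-/

open scoped Classical

noncomputable section

/-- The axis-aligned rectangle `[x₀, x₁] × [y₀, y₁]` in the Euclidean plane. -/
def rect (x₀ x₁ y₀ y₁ : ℝ) : Set (EuclideanSpace ℝ (Fin 2)) :=
  {p | p 0 ∈ Set.Icc x₀ x₁ ∧ p 1 ∈ Set.Icc y₀ y₁}

/-- `v` is a vertex (corner) of the rectangle `[x₀, x₁] × [y₀, y₁]`. -/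
def IsVertex (x₀ x₁ y₀ y₁ : ℝ) (v : EuclideanSpace ℝ (Fin 2)) : Prop :=
  (v 0 = x₀ ∨ v 0 = x₁) ∧ (v 1 = y₀ ∨ v 1 = y₁)

/-- The point of `ℝ³` above a planar point `w`, at height `h`. -/
def lift3 (w : EuclideanSpace ℝ (Fin 2)) (h : ℝ) : EuclideanSpace ℝ (Fin 3) :=
  (WithLp.equiv 2 (Fin 3 → ℝ)).symm ![w 0, w 1, h]

/-- The vertical downward ray of a user `u`, cast from `(u₁, u₂, z)` down to the plane
`z = 0`. -/
def userRay (u : EuclideanSpace ℝ (Fin 2)) (z : ℝ) : Set (EuclideanSpace ℝ (Fin 3)) :=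
  {x | ∃ t ∈ Set.Icc (0 : ℝ) z, x = lift3 u (z - t)}

section InnerProductSpace

variable {E : Type*} [NormedAddCommGroup E] [InnerProductSpace ℝ E]

def distSqSub (a q : E) : E →ᵃ[ℝ] ℝ where
  toFun x := dist x a ^ 2 - dist x q ^ 2
  linear := -2 • innerₛₗ ℝ (a - q)
  map_vadd' x v := by
    simp only [vadd_eq_add, dist_eq_norm, LinearMap.smul_apply, innerₛₗ_apply_apply]
    rw [add_sub_assoc, add_sub_assoc, norm_add_sq_real, norm_add_sq_real, inner_sub_left,
      inner_sub_right, inner_sub_right, real_inner_comm a v, real_inner_comm q v]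
    ring

@[simp]
lemma distSqSub_apply (a q x : E) : distSqSub a q x = dist x a ^ 2 - dist x q ^ 2 := rfl

lemma distSqSub_neg_iff {a q x : E} : distSqSub a q x < 0 ↔ dist x a < dist x q := by
  rw [distSqSub_apply, sub_neg, sq_lt_sq₀ dist_nonneg dist_nonneg]

lemma distSqSub_eq_zero_iff {a q x : E} : distSqSub a q x = 0 ↔ dist x a = dist x q := by
  rw [distSqSub_apply, sub_eq_zero, sq_eq_sq₀ dist_nonneg dist_nonneg]

end InnerProductSpace

section Triangle

variable {E : Type*} [AddCommGroup E] [Module ℝ E]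

lemma exists_pos_smul_sub_of_mem_segment {V P W : E} (hP : P ∈ segment ℝ V W) (hPV : P ≠ V) :
    ∃ β : ℝ, 0 < β ∧ P - V = β • (W - V) := by
  rw [segment_eq_image'] at hP
  obtain ⟨β, hβ, rfl⟩ := hP
  refine ⟨β, hβ.1.lt_of_ne ?_, add_sub_cancel_left _ _⟩
  rintro rfl
  simp at hPV

lemma add_smul_sub_add_smul_sub_mem_convexHull {V P P' : E} {s t : ℝ} (hs : 0 ≤ s) (ht : 0 ≤ t)
    (hst : s + t ≤ 1) : V + s • (P - V) + t • (P' - V) ∈ convexHull ℝ {V, P, P'} := by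
  have hmem := (convex_convexHull ℝ ({V, P, P'} : Set E)).sum_mem
    (t := Finset.univ) (w := ![1 - s - t, s, t]) (z := ![V, P, P'])
    (by
      intro i _
      fin_cases i <;>
        simp only [Fin.zero_eta, Fin.mk_one, Fin.reduceFinMk, Fin.isValue, Matrix.cons_val_zero,
          Matrix.cons_val_one, Matrix.cons_val] <;>
        linarith)
    (by simp [Fin.sum_univ_three]; ring)
    (by intro i _; fin_cases i <;> exact subset_convexHull ℝ _ (by simp))
  convert hmem using 1
  simp only [Fin.sum_univ_three, Matrix.cons_val_zero, Matrix.cons_val_one, Matrix.cons_val_two,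
    Matrix.head_cons, Matrix.tail_cons]
  module

lemma AffineMap.apply_add_smul_sub_add_smul_sub (g : E →ᵃ[ℝ] ℝ) (V P P' : E) (s t : ℝ) :
    g (V + s • (P - V) + t • (P' - V)) = g V + s * (g P - g V) + t * (g P' - g V) := by
  have := g.map_vadd V (s • (P - V) + t • (P' - V))
  rw [vadd_eq_add, vadd_eq_add, g.linear.map_add, g.linear.map_smul, g.linear.map_smul,
    ← vsub_eq_sub, ← vsub_eq_sub, g.linearMap_vsub, g.linearMap_vsub] at this
  simp only [vsub_eq_sub, smul_eq_mul] at this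
  rw [add_assoc, add_comm V, this]
  ring

lemma mem_convexHull_iff_apply_nonpos (g : E →ᵃ[ℝ] ℝ) {V P P' : E} (hV : g V < 0)
    (hP : g P = 0) (hP' : g P' = 0) {s t : ℝ} (hs : 0 ≤ s) (ht : 0 ≤ t) :
    V + s • (P - V) + t • (P' - V) ∈ convexHull ℝ {V, P, P'} ↔
      g (V + s • (P - V) + t • (P' - V)) ≤ 0 := by
  have hsub : convexHull ℝ {V, P, P'} ⊆ g ⁻¹' Set.Iic 0 :=
    convexHull_min (by simp [Set.insert_subset_iff, hV.le, hP, hP'])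
      ((convex_Iic 0).affine_preimage g)
  refine ⟨fun h => hsub h, fun h => add_smul_sub_add_smul_sub_mem_convexHull hs ht ?_⟩
  rw [g.apply_add_smul_sub_add_smul_sub, hP, hP'] at h
  nlinarith

lemma mem_convexHull_iff_apply_nonpos_of_mem_segment (g : E →ᵃ[ℝ] ℝ) {V W W' P P' : E}
    (hV : g V < 0) (hP : P ∈ segment ℝ V W) (hgP : g P = 0) (hP' : P' ∈ segment ℝ V W')
    (hgP' : g P' = 0) {l m : ℝ} (hl : 0 ≤ l) (hm : 0 ≤ m) :
    V + l • (W - V) + m • (W' - V) ∈ convexHull ℝ {V, P, P'} ↔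
      g (V + l • (W - V) + m • (W' - V)) ≤ 0 := by
  obtain ⟨β, hβ, hPV⟩ := exists_pos_smul_sub_of_mem_segment hP (by rintro rfl; linarith)
  obtain ⟨γ, hγ, hP'V⟩ := exists_pos_smul_sub_of_mem_segment hP' (by rintro rfl; linarith)
  have hu : V + l • (W - V) + m • (W' - V) = V + (l / β) • (P - V) + (m / γ) • (P' - V) := by
    rw [hPV, hP'V, smul_smul, smul_smul, div_mul_cancel₀ _ hβ.ne', div_mul_cancel₀ _ hγ.ne']
  rw [hu]
  exact mem_convexHull_iff_apply_nonpos g hV hgP hgP' (div_nonneg hl hβ.le) (div_nonneg hm hγ.le)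

end Triangle

lemma mem_uIcc_of_mem_Icc {x₀ x₁ c d t : ℝ} (hc : c = x₀ ∨ c = x₁) (hd : d = x₀ ∨ d = x₁)
    (hcd : c ≠ d) (ht : t ∈ Set.Icc x₀ x₁) : t ∈ Set.uIcc c d := by
  rcases hc with rfl | rfl <;> rcases hd with rfl | rfl
  · exact absurd rfl hcd
  · exact Set.Icc_subset_uIcc ht
  · exact Set.uIcc_comm c d ▸ Set.Icc_subset_uIcc ht
  · exact absurd rfl hcd

lemma exists_nonneg_mul_sub_of_mem_uIcc {c d t : ℝ} (ht : t ∈ Set.uIcc c d) :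
    ∃ l : ℝ, 0 ≤ l ∧ t - c = l * (d - c) := by
  rw [← segment_eq_uIcc, segment_eq_image'] at ht
  obtain ⟨l, hl, rfl⟩ := ht
  exact ⟨l, hl.1, by simp⟩

lemma exists_eq_add_smul_sub_add_smul_sub_of_mem_rect {x₀ x₁ y₀ y₁ : ℝ}
    {u V W W' : EuclideanSpace ℝ (Fin 2)} (hu : u ∈ rect x₀ x₁ y₀ y₁)
    (hV : IsVertex x₀ x₁ y₀ y₁ V) (hW : IsVertex x₀ x₁ y₀ y₁ W) (hWV : W ≠ V) (hW1 : W 1 = V 1)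
    (hW' : IsVertex x₀ x₁ y₀ y₁ W') (hW'V : W' ≠ V) (hW'0 : W' 0 = V 0) :
    ∃ l m : ℝ, 0 ≤ l ∧ 0 ≤ m ∧ u = V + l • (W - V) + m • (W' - V) := by
  have hW0 : V 0 ≠ W 0 := fun h => hWV (by ext i; fin_cases i <;> simp [h, hW1])
  have hW'1 : V 1 ≠ W' 1 := fun h => hW'V (by ext i; fin_cases i <;> simp [h, hW'0])
  obtain ⟨l, hl, hl'⟩ :=
    exists_nonneg_mul_sub_of_mem_uIcc (mem_uIcc_of_mem_Icc hV.1 hW.1 hW0 hu.1)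
  obtain ⟨m, hm, hm'⟩ :=
    exists_nonneg_mul_sub_of_mem_uIcc (mem_uIcc_of_mem_Icc hV.2 hW'.2 hW'1 hu.2)
  refine ⟨l, m, hl, hm, ?_⟩
  ext i
  fin_cases i <;>
    simp only [Fin.zero_eta, Fin.mk_one, Fin.isValue, PiLp.add_apply, PiLp.smul_apply,
      PiLp.sub_apply, smul_eq_mul, hW1, hW'0, sub_self, mul_zero, add_zero] <;>
    linarith

lemma lift3_inj {s s' : EuclideanSpace ℝ (Fin 2)} {c c' : ℝ} :
    lift3 s c = lift3 s' c' ↔ s = s' ∧ c = c' := by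
  refine ⟨fun h => ?_, by rintro ⟨rfl, rfl⟩; rfl⟩
  have h := congrArg (WithLp.equiv 2 (Fin 3 → ℝ)) h
  simp only [lift3, Equiv.apply_symm_apply] at h
  refine ⟨?_, by simpa using congrFun h 2⟩
  ext i
  fin_cases i
  · simpa using congrFun h 0
  · simpa using congrFun h 1

lemma userRay_inter_image_lift3_nonempty_iff {u : EuclideanSpace ℝ (Fin 2)} {z c : ℝ}
    (hc : 0 ≤ c) (hcz : c ≤ z) (S : Set (EuclideanSpace ℝ (Fin 2))) :
    (userRay u z ∩ (fun s => lift3 s c) '' S).Nonempty ↔ u ∈ S := by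
  constructor
  · rintro ⟨x, ⟨t, -, rfl⟩, s, hs, hsu⟩
    rwa [← (lift3_inj.1 hsu).1]
  · intro huS
    exact ⟨lift3 u c, ⟨z - c, ⟨by linarith, by linarith⟩, by rw [sub_sub_cancel]⟩, u, huS, rfl⟩

lemma mem_convexHull_iff_dist_lt {x₀ x₁ y₀ y₁ : ℝ}
    {a q u V W W' P P' : EuclideanSpace ℝ (Fin 2)}
    (hu : u ∈ rect x₀ x₁ y₀ y₁) (hne : dist u a ≠ dist u q)
    (hV : IsVertex x₀ x₁ y₀ y₁ V) (hW : IsVertex x₀ x₁ y₀ y₁ W) (hWV : W ≠ V) (hW1 : W 1 = V 1)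
    (hW' : IsVertex x₀ x₁ y₀ y₁ W') (hW'V : W' ≠ V) (hW'0 : W' 0 = V 0)
    (hP : P ∈ segment ℝ V W) (hPa : dist P a = dist P q)
    (hP' : P' ∈ segment ℝ V W') (hP'a : dist P' a = dist P' q)
    (hVa : dist V a < dist V q) :
    u ∈ convexHull ℝ {V, P, P'} ↔ dist u a < dist u q := by
  obtain ⟨l, m, hl, hm, rfl⟩ :=
    exists_eq_add_smul_sub_add_smul_sub_of_mem_rect hu hV hW hWV hW1 hW' hW'V hW'0
  rw [mem_convexHull_iff_apply_nonpos_of_mem_segment (distSqSub a q) (distSqSub_neg_iff.2 hVa)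
    hP (distSqSub_eq_zero_iff.2 hPa) hP' (distSqSub_eq_zero_iff.2 hP'a) hl hm,
    ← distSqSub_neg_iff]
  exact ⟨fun h => h.lt_of_ne (mt distSqSub_eq_zero_iff.1 hne), le_of_lt⟩

theorem stmt_1_general (F : Finset (EuclideanSpace ℝ (Fin 2)))
    (q : EuclideanSpace ℝ (Fin 2)) (k : ℕ)
    (x₀ x₁ y₀ y₁ : ℝ)
    (u : EuclideanSpace ℝ (Fin 2)) (hu : u ∈ rect x₀ x₁ y₀ y₁)
    (hnd : ∀ a ∈ F.erase q, dist u a ≠ dist u q)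
    (v w w' p p' : EuclideanSpace ℝ (Fin 2) → EuclideanSpace ℝ (Fin 2))
    (hv : ∀ a ∈ F.erase q, IsVertex x₀ x₁ y₀ y₁ (v a))
    (hw : ∀ a ∈ F.erase q,
      IsVertex x₀ x₁ y₀ y₁ (w a) ∧ w a ≠ v a ∧ w a 1 = v a 1)
    (hw' : ∀ a ∈ F.erase q,
      IsVertex x₀ x₁ y₀ y₁ (w' a) ∧ w' a ≠ v a ∧ w' a 0 = v a 0)
    (hp : ∀ a ∈ F.erase q,
      p a ∈ segment ℝ (v a) (w a) ∧ dist (p a) a = dist (p a) q)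
    (hp' : ∀ a ∈ F.erase q,
      p' a ∈ segment ℝ (v a) (w' a) ∧ dist (p' a) a = dist (p' a) q)
    (hva : ∀ a ∈ F.erase q, dist (v a) a < dist (v a) q)
    (z : ℝ)
    (h : EuclideanSpace ℝ (Fin 2) → ℝ)
    (hh : ∀ a ∈ F.erase q, 0 < h a ∧ h a < z)
    (O : EuclideanSpace ℝ (Fin 2) → Set (EuclideanSpace ℝ (Fin 3)))
    (hO : ∀ a ∈ F.erase q,
      O a = (fun s => lift3 s (h a)) '' convexHull ℝ {v a, p a, p' a}) :
    ((F.erase q).filter fun a => (userRay u z ∩ O a).Nonempty).card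
        = ((F.erase q).filter fun a => dist u a < dist u q).card ∧
      (((F.erase q).filter fun a => dist u a < dist u q).card < k ↔
        ((F.erase q).filter fun a => (userRay u z ∩ O a).Nonempty).card < k) := by
  have hmeets : ∀ a ∈ F.erase q, (userRay u z ∩ O a).Nonempty ↔ dist u a < dist u q := by
    intro a ha
    rw [hO a ha, userRay_inter_image_lift3_nonempty_iff (hh a ha).1.le (hh a ha).2.le]
    exact mem_convexHull_iff_dist_lt hu (hnd a ha) (hv a ha) (hw a ha).1 (hw a ha).2.1
      (hw a ha).2.2 (hw' a ha).1 (hw' a ha).2.1 (hw' a ha).2.2 (hp a ha).1 (hp a ha).2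
      (hp' a ha).1 (hp' a ha).2 (hva a ha)
  have hcard := congrArg Finset.card (Finset.filter_congr hmeets)
  exact ⟨hcard, by rw [hcard]⟩

/-- Correctness of the ray-casting formulation of RkNN (normal occluder case): the
number of occluders met by the ray of a user `u` equals the number of competing
facilities strictly closer to `u` than the query `q`; consequently `u` is a reverse
`k`-nearest neighbor of `q` iff its ray meets fewer than `k` occluders. -/
theorem stmt_1 (F : Finset (EuclideanSpace ℝ (Fin 2)))
    (q : EuclideanSpace ℝ (Fin 2)) (hqF : q ∈ F) (k : ℕ)
    (x₀ x₁ y₀ y₁ : ℝ) (hx : x₀ < x₁) (hy : y₀ < y₁)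
    (u : EuclideanSpace ℝ (Fin 2)) (hu : u ∈ rect x₀ x₁ y₀ y₁)
    (hnd : ∀ a ∈ F.erase q, dist u a ≠ dist u q)
    (v w w' p p' : EuclideanSpace ℝ (Fin 2) → EuclideanSpace ℝ (Fin 2))
    (hv : ∀ a ∈ F.erase q, IsVertex x₀ x₁ y₀ y₁ (v a))
    (hw : ∀ a ∈ F.erase q,
      IsVertex x₀ x₁ y₀ y₁ (w a) ∧ w a ≠ v a ∧ w a 1 = v a 1)
    (hw' : ∀ a ∈ F.erase q,
      IsVertex x₀ x₁ y₀ y₁ (w' a) ∧ w' a ≠ v a ∧ w' a 0 = v a 0)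
    (hp : ∀ a ∈ F.erase q,
      p a ∈ segment ℝ (v a) (w a) ∧ dist (p a) a = dist (p a) q)
    (hp' : ∀ a ∈ F.erase q,
      p' a ∈ segment ℝ (v a) (w' a) ∧ dist (p' a) a = dist (p' a) q)
    (hva : ∀ a ∈ F.erase q, dist (v a) a < dist (v a) q)
    (hwa : ∀ a ∈ F.erase q, dist (w a) q ≤ dist (w a) a)
    (hw'a : ∀ a ∈ F.erase q, dist (w' a) q ≤ dist (w' a) a)
    (z : ℝ) (hz : 0 < z)
    (h : EuclideanSpace ℝ (Fin 2) → ℝ)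
    (hh : ∀ a ∈ F.erase q, 0 < h a ∧ h a < z)
    (O : EuclideanSpace ℝ (Fin 2) → Set (EuclideanSpace ℝ (Fin 3)))
    (hO : ∀ a ∈ F.erase q,
      O a = (fun s => lift3 s (h a)) '' convexHull ℝ {v a, p a, p' a}) :
    ((F.erase q).filter fun a => (userRay u z ∩ O a).Nonempty).card
        = ((F.erase q).filter fun a => dist u a < dist u q).card ∧
      (((F.erase q).filter fun a => dist u a < dist u q).card < k ↔
        ((F.erase q).filter fun a => (userRay u z ∩ O a).Nonempty).card < k) :=
  stmt_1_general F q k x₀ x₁ y₀ y₁ u hu hnd v w w' p p' hv hw hw' hp hp' hva z h hh O hO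

end
end

section
/- Let R = [x₀, x₁] × [y₀, y₁] ⊆ ℝ² be an axis-aligned rectangle with x₀ < x₁ and y₀ < y₁, let n ∈ ℝ² be a nonzero vector, c ∈ ℝ, and let H = {p ∈ ℝ² : ⟪p, n⟫ ≤ c} be a closed half-plane. Let v be a vertex of R with ⟪v, n⟫ < c, and let w and w' be the two vertices of R adjacent to v, with ⟪w, n⟫ ≥ c and ⟪w', n⟫ ≥ c. Let p₁ be a point on the segment from v to w and p₂ a point on the segment from v to w' with ⟪p₁, n⟫ = c and ⟪p₂, n⟫ = c. Then R ∩ H = convexHull {v, p₁, p₂}. -/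
/-!
Seen from the corner `v`, the rectangle is the parallelogram of points
`v + a • (w - v) + b • (w' - v)` with `a, b ∈ [0, 1]`, and the crossing points are
`p₁ = v + s • (w - v)`, `p₂ = v + t • (w' - v)` with `s, t ∈ (0, 1]`. For the linear functional
`f = ⟪·, n⟫` put `d = c - f v > 0`; then `s f (w - v) = t f (w' - v) = d`, so the half-plane
condition `a f (w - v) + b f (w' - v) ≤ d` reads `a / s + b / t ≤ 1`, and the point is the convex
combination `(1 - a / s - b / t) v + (a / s) p₁ + (b / t) p₂`.
-/

open scoped RealInnerProductSpace

noncomputable section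

open Set

section Parallelogram

variable (𝕜 : Type*) {E : Type*} [Field 𝕜] [LinearOrder 𝕜] [IsStrictOrderedRing 𝕜]
  [AddCommGroup E] [Module 𝕜 E]

theorem smul_add_smul_add_smul_mem_convexHull {x y z : E} {a b c : 𝕜}
    (ha : 0 ≤ a) (hb : 0 ≤ b) (hc : 0 ≤ c) (habc : a + b + c = 1) :
    a • x + b • y + c • z ∈ convexHull 𝕜 {x, y, z} := by
  have hsum : a • x + b • y + c • z = ∑ i : Fin 3, ![a, b, c] i • ![x, y, z] i := by
    simp [Fin.sum_univ_three]
  rw [hsum]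
  apply (convex_convexHull 𝕜 _).sum_mem
  · intro i _; fin_cases i <;> assumption
  · simp [Fin.sum_univ_three, habc]
  · intro i _; apply subset_convexHull; fin_cases i <;> simp

def parallelogram (v w w' : E) : Set E :=
  {p | ∃ a ∈ Icc (0 : 𝕜) 1, ∃ b ∈ Icc (0 : 𝕜) 1, v + a • (w - v) + b • (w' - v) = p}

theorem convex_parallelogram (v w w' : E) : Convex 𝕜 (parallelogram 𝕜 v w w') := by
  rintro _ ⟨a, ha, b, hb, rfl⟩ _ ⟨a', ha', b', hb', rfl⟩ μ ν hμ hν hμν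
  refine ⟨μ * a + ν * a', convex_Icc 0 1 ha ha' hμ hν hμν,
    μ * b + ν * b', convex_Icc 0 1 hb hb' hμ hν hμν, ?_⟩
  match_scalars
  · linear_combination -hμν
  · ring
  · ring

variable {𝕜}

theorem Icc_eq_segment_of_mem_pair {x₀ x₁ a b : 𝕜} (hx : x₀ ≤ x₁) (ha : a = x₀ ∨ a = x₁)
    (hb : b = x₀ ∨ b = x₁) (hba : b ≠ a) :
    Icc x₀ x₁ = segment 𝕜 a b := by
  rcases ha with rfl | rfl <;> rcases hb with rfl | rfl
  · exact absurd rfl hba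
  · exact (segment_eq_Icc hx).symm
  · rw [segment_symm, segment_eq_Icc hx]
  · exact absurd rfl hba

theorem parallelogram_inter_halfSpace_subset_convexHull (f : E →ₗ[𝕜] 𝕜) {v w w' : E}
    {c s t : 𝕜} (hv : f v < c) (hs_pos : 0 < s) (ht_pos : 0 < t)
    (hs : s * f (w - v) = c - f v) (ht : t * f (w' - v) = c - f v) :
    parallelogram 𝕜 v w w' ∩ {p | f p ≤ c} ⊆
      convexHull 𝕜 {v, v + s • (w - v), v + t • (w' - v)} := by
  rintro _ ⟨⟨a, ⟨ha0, -⟩, b, ⟨hb0, -⟩, rfl⟩, hp⟩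
  simp only [mem_ofPred_eq, map_add, map_smul, smul_eq_mul] at hp
  have hd : 0 < c - f v := sub_pos.2 hv
  have hab : a / s + b / t ≤ 1 := by
    rw [div_add_div _ _ hs_pos.ne' ht_pos.ne', div_le_one (by positivity)]
    refine le_of_mul_le_mul_left ?_ hd
    calc (c - f v) * (a * t + s * b) = s * t * (a * f (w - v) + b * f (w' - v)) := by
          linear_combination (-(a * t)) * hs - b * s * ht
      _ ≤ s * t * (c - f v) := by gcongr; linarith
      _ = (c - f v) * (s * t) := by ring
  convert smul_add_smul_add_smul_mem_convexHull 𝕜 (sub_nonneg.2 hab)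
    (div_nonneg ha0 hs_pos.le) (div_nonneg hb0 ht_pos.le) (by ring) using 1
  match_scalars
  · field_simp
    ring
  · field_simp
  · field_simp

theorem parallelogram_inter_halfSpace_eq_convexHull (f : E →ₗ[𝕜] 𝕜) {v w w' p₁ p₂ : E} {c : 𝕜}
    (hv : f v < c) (hp₁ : p₁ ∈ segment 𝕜 v w) (hp₁c : f p₁ = c)
    (hp₂ : p₂ ∈ segment 𝕜 v w') (hp₂c : f p₂ = c) :
    parallelogram 𝕜 v w w' ∩ {p | f p ≤ c} = convexHull 𝕜 {v, p₁, p₂} := by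
  rw [segment_eq_image'] at hp₁ hp₂
  obtain ⟨s, ⟨hs0, hs1⟩, rfl⟩ := hp₁
  obtain ⟨t, ⟨ht0, ht1⟩, rfl⟩ := hp₂
  have hs : s * f (w - v) = c - f v := by
    rw [← hp₁c, map_add, map_smul, smul_eq_mul]; ring
  have ht : t * f (w' - v) = c - f v := by
    rw [← hp₂c, map_add, map_smul, smul_eq_mul]; ring
  have hs_pos : 0 < s := hs0.lt_of_ne (by rintro rfl; linarith [zero_mul (f (w - v))])
  have ht_pos : 0 < t := ht0.lt_of_ne (by rintro rfl; linarith [zero_mul (f (w' - v))])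
  refine (parallelogram_inter_halfSpace_subset_convexHull f hv hs_pos ht_pos hs ht).antisymm
    (convexHull_min ?_
      ((convex_parallelogram 𝕜 v w w').inter (convex_halfSpace_le f.isLinear c)))
  rintro _ (rfl | rfl | rfl)
  · exact ⟨⟨0, left_mem_Icc.2 zero_le_one, 0, left_mem_Icc.2 zero_le_one, by simp⟩, hv.le⟩
  · exact ⟨⟨s, ⟨hs0, hs1⟩, 0, left_mem_Icc.2 zero_le_one, by simp⟩, hp₁c.le⟩
  · exact ⟨⟨0, left_mem_Icc.2 zero_le_one, t, ⟨ht0, ht1⟩, by simp⟩, hp₂c.le⟩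

end Parallelogram

theorem rect_eq_parallelogram {x₀ x₁ y₀ y₁ : ℝ} (hx : x₀ ≤ x₁) (hy : y₀ ≤ y₁)
    {v w w' : EuclideanSpace ℝ (Fin 2)} (hv : IsVertex x₀ x₁ y₀ y₁ v)
    (hw : IsVertex x₀ x₁ y₀ y₁ w) (hwv : w ≠ v) (hwadj : w 1 = v 1)
    (hw' : IsVertex x₀ x₁ y₀ y₁ w') (hw'v : w' ≠ v) (hw'adj : w' 0 = v 0) :
    rect x₀ x₁ y₀ y₁ = parallelogram ℝ v w w' := by
  have hw0 : w 0 ≠ v 0 := fun h => hwv (by ext i; fin_cases i <;> assumption)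
  have hw'1 : w' 1 ≠ v 1 := fun h => hw'v (by ext i; fin_cases i <;> assumption)
  ext p
  simp only [rect, parallelogram, mem_ofPred_eq, Icc_eq_segment_of_mem_pair hx hv.1 hw.1 hw0,
    Icc_eq_segment_of_mem_pair hy hv.2 hw'.2 hw'1, segment_eq_image', mem_image]
  constructor
  · rintro ⟨⟨a, ha, hpa⟩, b, hb, hpb⟩
    refine ⟨a, ha, b, hb, ?_⟩
    ext i; fin_cases i <;> simp [hwadj, hw'adj, ← hpa, ← hpb]
  · rintro ⟨a, ha, b, hb, rfl⟩
    exact ⟨⟨a, ha, by simp [hw'adj]⟩, b, hb, by simp [hwadj]⟩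

theorem stmt_4_general (x₀ x₁ y₀ y₁ : ℝ) (hx : x₀ < x₁) (hy : y₀ < y₁)
    (n : EuclideanSpace ℝ (Fin 2)) (c : ℝ)
    (v w w' p₁ p₂ : EuclideanSpace ℝ (Fin 2))
    (hv : IsVertex x₀ x₁ y₀ y₁ v) (hvn : ⟪v, n⟫ < c)
    (hw : IsVertex x₀ x₁ y₀ y₁ w) (hwv : w ≠ v) (hwadj : w 1 = v 1)
    (hw' : IsVertex x₀ x₁ y₀ y₁ w') (hw'v : w' ≠ v) (hw'adj : w' 0 = v 0)
    (hp₁ : p₁ ∈ segment ℝ v w) (hp₁n : ⟪p₁, n⟫ = c)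
    (hp₂ : p₂ ∈ segment ℝ v w') (hp₂n : ⟪p₂, n⟫ = c) :
    rect x₀ x₁ y₀ y₁ ∩ {p | ⟪p, n⟫ ≤ c} = convexHull ℝ {v, p₁, p₂} := by
  rw [rect_eq_parallelogram hx.le hy.le hv hw hwv hwadj hw' hw'v hw'adj]
  exact parallelogram_inter_halfSpace_eq_convexHull ((innerₗ _).flip n) hvn hp₁ hp₁n hp₂ hp₂n

/-- Occluder construction, normal case: if the boundary line of a closed half-plane `H`
crosses the two rectangle edges incident to a corner `v` lying strictly inside `H`,
then the part of the rectangle inside `H` is exactly the triangle with vertices `v`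
and the two crossing points. -/
theorem stmt_4 (x₀ x₁ y₀ y₁ : ℝ) (hx : x₀ < x₁) (hy : y₀ < y₁)
    (n : EuclideanSpace ℝ (Fin 2)) (hn : n ≠ 0) (c : ℝ)
    (v w w' p₁ p₂ : EuclideanSpace ℝ (Fin 2))
    (hv : IsVertex x₀ x₁ y₀ y₁ v) (hvn : ⟪v, n⟫ < c)
    (hw : IsVertex x₀ x₁ y₀ y₁ w) (hwv : w ≠ v) (hwadj : w 1 = v 1)
    (hwn : c ≤ ⟪w, n⟫)
    (hw' : IsVertex x₀ x₁ y₀ y₁ w') (hw'v : w' ≠ v) (hw'adj : w' 0 = v 0)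
    (hw'n : c ≤ ⟪w', n⟫)
    (hp₁ : p₁ ∈ segment ℝ v w) (hp₁n : ⟪p₁, n⟫ = c)
    (hp₂ : p₂ ∈ segment ℝ v w') (hp₂n : ⟪p₂, n⟫ = c) :
    rect x₀ x₁ y₀ y₁ ∩ {p | ⟪p, n⟫ ≤ c} = convexHull ℝ {v, p₁, p₂} :=
  stmt_4_general x₀ x₁ y₀ y₁ hx hy n c v w w' p₁ p₂ hv hvn hw hwv hwadj hw' hw'v hw'adj hp₁ hp₁n hp₂
    hp₂n

end
end

section
/- Let V be a real inner product space and let q, u, f ∈ V be points with f ≠ q, dist(q, f) ≤ dist(q, u), and the angle between the vectors f − q and u − q strictly less than π/3. Then dist(u, f) < dist(u, q). -/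
/-! Write `x = f - q`, `y = u - q`. Since `‖y - x‖² = ‖y‖² - 2⟪x, y⟫ + ‖x‖²`, it suffices that
`‖x‖² < 2⟪x, y⟫`; an angle below `π / 3` has cosine above `1 / 2`, so
`2⟪x, y⟫ > ‖x‖ ‖y‖ ≥ ‖x‖²`. -/

open Real InnerProductGeometry

section

variable {V : Type*} [NormedAddCommGroup V] [InnerProductSpace ℝ V]

theorem InnerProductGeometry.norm_mul_norm_lt_two_mul_inner_of_angle_lt_pi_div_three {x y : V}
    (h : angle x y < π / 3) : ‖x‖ * ‖y‖ < 2 * inner ℝ x y := by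
  have hx : x ≠ 0 := by
    rintro rfl
    rw [angle_zero_left] at h
    linarith [pi_pos]
  have hy : y ≠ 0 := by
    rintro rfl
    rw [angle_zero_right] at h
    linarith [pi_pos]
  have hcos : 1 / 2 < cos (angle x y) :=
    cos_pi_div_three ▸ cos_lt_cos_of_nonneg_of_le_pi (angle_nonneg x y) (by linarith [pi_pos]) h
  rw [← cos_angle_mul_norm_mul_norm]
  nlinarith [mul_pos (norm_pos_iff.2 hx) (norm_pos_iff.2 hy)]

theorem InnerProductGeometry.norm_sub_lt_of_norm_le_of_angle_lt_pi_div_three {x y : V}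
    (hle : ‖x‖ ≤ ‖y‖) (h : angle x y < π / 3) : ‖y - x‖ < ‖y‖ := by
  suffices ‖y - x‖ ^ 2 < ‖y‖ ^ 2 from lt_of_pow_lt_pow_left₀ 2 (norm_nonneg _) this
  have hinner := norm_mul_norm_lt_two_mul_inner_of_angle_lt_pi_div_three h
  have hsq : ‖x‖ * ‖x‖ ≤ ‖x‖ * ‖y‖ := mul_le_mul_of_nonneg_left hle (norm_nonneg x)
  rw [norm_sub_sq_real, real_inner_comm]
  nlinarith

end

theorem stmt_5_general {V : Type*} [NormedAddCommGroup V] [InnerProductSpace ℝ V]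
    (q u f : V) (hle : dist q f ≤ dist q u)
    (hangle : InnerProductGeometry.angle (f - q) (u - q) < Real.pi / 3) :
    dist u f < dist u q := by
  rw [dist_comm q f, dist_comm q u, dist_eq_norm, dist_eq_norm] at hle
  rw [dist_eq_norm, dist_eq_norm, ← sub_sub_sub_cancel_right u f q]
  exact norm_sub_lt_of_norm_le_of_angle_lt_pi_div_three hle hangle

/-- SIX filtering fact: a facility `f` lying at angle `< π/3` from `u` as seen from `q`,
and no farther from `q` than `u` is, is strictly closer to `u` than `q` is. -/
theorem stmt_5 {V : Type*} [NormedAddCommGroup V] [InnerProductSpace ℝ V]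
    (q u f : V) (hfq : f ≠ q) (hle : dist q f ≤ dist q u)
    (hangle : InnerProductGeometry.angle (f - q) (u - q) < Real.pi / 3) :
    dist u f < dist u q :=
  stmt_5_general q u f hle hangle
end

section
/- Let V be a real inner product space, F a finite set of points of V, q ∈ F, u ∈ V, and k a natural number. Suppose there exists a subset T ⊆ F \ {q} with exactly k elements such that every f ∈ T satisfies dist(q, f) ≤ dist(q, u) and the angle between f − q and u − q is strictly less than π/3. Then the number of elements a ∈ F with a ≠ q and dist(u, a) < dist(u, q) is at least k; hence u is not a reverse k-nearest neighbor of q (i.e. it is not the case that fewer than k elements a ∈ F \ {q} satisfy dist(u, a) < dist(u, q)). -/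
/-!
An angle below `π / 3` at `q` has cosine above `1 / 2`, so by the law of cosines
`‖u - f‖² < ‖u - q‖² - ‖f - q‖ ‖u - q‖ + ‖f - q‖² ≤ ‖u - q‖²` whenever `‖f - q‖ ≤ ‖u - q‖`.
Hence each of the `k` given facilities is strictly closer to `u` than `q` is.
-/

open scoped Classical RealInnerProductSpace

namespace InnerProductGeometry

variable {V : Type*} [NormedAddCommGroup V] [InnerProductSpace ℝ V]

theorem norm_mul_norm_div_two_lt_inner_of_angle_lt_pi_div_three {x y : V}
    (h : angle x y < Real.pi / 3) : ‖x‖ * ‖y‖ / 2 < ⟪x, y⟫ := by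
  have hx : x ≠ 0 := by
    rintro rfl
    rw [angle_zero_left] at h
    linarith [Real.pi_pos]
  have hy : y ≠ 0 := by
    rintro rfl
    rw [angle_zero_right] at h
    linarith [Real.pi_pos]
  have hcos : 1 / 2 < Real.cos (angle x y) := by
    rw [← Real.cos_pi_div_three]
    exact Real.cos_lt_cos_of_nonneg_of_le_pi (angle_nonneg x y) (by linarith [Real.pi_pos]) h
  have hpos : 0 < ‖x‖ * ‖y‖ := by positivity
  rw [← cos_angle_mul_norm_mul_norm]
  nlinarith

theorem norm_sub_lt_of_norm_le_of_angle_lt_pi_div_three_s6 {x y : V} (hxy : ‖x‖ ≤ ‖y‖)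
    (h : angle x y < Real.pi / 3) : ‖y - x‖ < ‖y‖ := by
  have hinner := norm_mul_norm_div_two_lt_inner_of_angle_lt_pi_div_three h
  have hsq : ‖y - x‖ ^ 2 < ‖y‖ ^ 2 := by
    rw [norm_sub_sq_real, real_inner_comm]
    nlinarith [norm_nonneg x]
  exact lt_of_pow_lt_pow_left₀ 2 (norm_nonneg y) hsq

theorem dist_lt_of_dist_le_of_angle_lt_pi_div_three {p a b : V} (hd : dist p a ≤ dist p b)
    (h : angle (a - p) (b - p) < Real.pi / 3) : dist b a < dist b p := by
  rw [dist_comm p a, dist_comm p b, dist_eq_norm, dist_eq_norm] at hd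
  rw [dist_eq_norm, dist_eq_norm, ← sub_sub_sub_cancel_right b a p]
  exact norm_sub_lt_of_norm_le_of_angle_lt_pi_div_three_s6 hd h

end InnerProductGeometry

theorem stmt_6_general {V : Type*} [NormedAddCommGroup V] [InnerProductSpace ℝ V]
    (F : Finset V) (q : V) (u : V) (k : ℕ)
    (h : ∃ T : Finset V, T ⊆ F.erase q ∧ T.card = k ∧
      ∀ f ∈ T, dist q f ≤ dist q u ∧
        InnerProductGeometry.angle (f - q) (u - q) < Real.pi / 3) :
    k ≤ (F.filter fun a => a ≠ q ∧ dist u a < dist u q).card ∧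
      ¬ (F.filter fun a => a ≠ q ∧ dist u a < dist u q).card < k := by
  obtain ⟨T, hTF, rfl, hT⟩ := h
  have hsub : T ⊆ F.filter fun a => a ≠ q ∧ dist u a < dist u q := by
    intro f hf
    obtain ⟨hfq, hfF⟩ := Finset.mem_erase.mp (hTF hf)
    obtain ⟨hd, hangle⟩ := hT f hf
    exact Finset.mem_filter.mpr
      ⟨hfF, hfq, InnerProductGeometry.dist_lt_of_dist_le_of_angle_lt_pi_div_three hd hangle⟩
  have hcard := Finset.card_le_card hsub
  exact ⟨hcard, not_lt.mpr hcard⟩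

/-- Correctness of SIX-style regional pruning: if at least `k` facilities of `F \ {q}`
lie in the same `60°` sector around `q` as `u` and no farther from `q` than `u`, then
at least `k` facilities other than `q` are strictly closer to `u` than `q`, so `u` is
not a reverse `k`-nearest neighbor of `q`. -/
theorem stmt_6 {V : Type*} [NormedAddCommGroup V] [InnerProductSpace ℝ V]
    (F : Finset V) (q : V) (hq : q ∈ F) (u : V) (k : ℕ)
    (h : ∃ T : Finset V, T ⊆ F.erase q ∧ T.card = k ∧
      ∀ f ∈ T, dist q f ≤ dist q u ∧
        InnerProductGeometry.angle (f - q) (u - q) < Real.pi / 3) :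
    k ≤ (F.filter fun a => a ≠ q ∧ dist u a < dist u q).card ∧
      ¬ (F.filter fun a => a ≠ q ∧ dist u a < dist u q).card < k :=
  stmt_6_general F q u k h
end

section
/- Let V be a real inner product space, F a finite set of points of V, u ∈ V, k a natural number, q ∈ F, and let S be a k-nearest-neighbor set of u in F. If there exist at least k elements a ∈ F \ {q} satisfying ⟪u − midpoint(a, q), a − q⟫ > 0 (i.e. u lies strictly on a's side of the perpendicular bisector of a and q), then q ∉ S. -/
open scoped Classical RealInnerProductSpace

/-!
Writing `m` for the midpoint of `a` and `q`, we have `u - q = (u - m) + (a - q)/2` and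
`u - a = (u - m) - (a - q)/2`, so `‖u - q‖² - ‖u - a‖² = 2 ⟪u - m, a - q⟫`: the open half-space
on `a`'s side of the bisector is exactly the set of points strictly closer to `a` than to `q`.
If `q` belonged to a `k`-nearest-neighbor set `S` of `u`, every facility strictly closer to `u`
than `q` would lie in `S` as well, so `S` would contain `q` together with at least `k` such
facilities, more than its `k` elements.
-/

section Bisector

variable {V : Type*} [NormedAddCommGroup V] [InnerProductSpace ℝ V]

theorem norm_sub_sq_sub_norm_sub_sq_eq_inner_sub_midpoint (u a q : V) :
    ‖u - q‖ ^ 2 - ‖u - a‖ ^ 2 = 2 * ⟪u - midpoint ℝ a q, a - q⟫ := by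
  have hq : u - q = (u - midpoint ℝ a q) + (2⁻¹ : ℝ) • (a - q) := by
    rw [midpoint_eq_smul_add, invOf_eq_inv]; module
  have ha : u - a = (u - midpoint ℝ a q) - (2⁻¹ : ℝ) • (a - q) := by
    rw [midpoint_eq_smul_add, invOf_eq_inv]; module
  rw [hq, ha, norm_add_sq_real (u - midpoint ℝ a q), norm_sub_sq_real (u - midpoint ℝ a q),
    real_inner_smul_right]
  ring

theorem dist_lt_dist_iff_inner_sub_midpoint_pos (u a q : V) :
    dist u a < dist u q ↔ 0 < ⟪u - midpoint ℝ a q, a - q⟫ := by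
  rw [dist_eq_norm, dist_eq_norm, ← sq_lt_sq₀ (norm_nonneg _) (norm_nonneg _), ← sub_pos,
    norm_sub_sq_sub_norm_sub_sq_eq_inner_sub_midpoint]
  exact mul_pos_iff_of_pos_left two_pos

end Bisector

theorem IsKNNSet.card_closer_lt {X : Type*} [MetricSpace X] {F : Finset X} {u : X} {k : ℕ}
    {S : Finset X} (hS : IsKNNSet F u k S) {q : X} (hqS : q ∈ S) :
    ((F.erase q).filter fun a => dist u a < dist u q).card < k := by
  obtain ⟨-, hcard, hnear⟩ := hS
  have hcloser_sub : ((F.erase q).filter fun a => dist u a < dist u q) ⊆ S.erase q := by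
    intro a ha
    obtain ⟨haq, haF⟩ := Finset.mem_erase.mp (Finset.mem_filter.mp ha).1
    refine Finset.mem_erase.mpr ⟨haq, ?_⟩
    by_contra haS
    exact (hnear q hqS a haF haS).not_gt (Finset.mem_filter.mp ha).2
  calc _ ≤ (S.erase q).card := Finset.card_le_card hcloser_sub
    _ < S.card := Finset.card_erase_lt_of_mem hqS
    _ = k := hcard

theorem stmt_7_general {V : Type*} [NormedAddCommGroup V] [InnerProductSpace ℝ V]
    (F : Finset V) (u : V) (k : ℕ) (q : V)
    (S : Finset V) (hS : IsKNNSet F u k S)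
    (h : k ≤ ((F.erase q).filter fun a =>
        0 < ⟪u - midpoint ℝ a q, a - q⟫).card) :
    q ∉ S := by
  intro hqS
  have hhalf_eq : ((F.erase q).filter fun a => 0 < ⟪u - midpoint ℝ a q, a - q⟫) =
      (F.erase q).filter fun a => dist u a < dist u q := by
    simp only [dist_lt_dist_iff_inner_sub_midpoint_pos]
  exact (hS.card_closer_lt hqS).not_ge (hhalf_eq ▸ h)

/-- Correctness of TPL half-space pruning: if `u` lies strictly on `a`'s side of the
perpendicular bisector of `a` and `q` for at least `k` facilities `a ∈ F \ {q}`, then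
`q` is not among the `k` nearest facilities of `u`. -/
theorem stmt_7 {V : Type*} [NormedAddCommGroup V] [InnerProductSpace ℝ V]
    (F : Finset V) (u : V) (k : ℕ) (q : V) (hq : q ∈ F)
    (S : Finset V) (hS : IsKNNSet F u k S)
    (h : k ≤ ((F.erase q).filter fun a =>
        0 < ⟪u - midpoint ℝ a q, a - q⟫).card) :
    q ∉ S :=
  stmt_7_general F u k q S hS h
end

section
/- Let E be a real normed vector space, F a finite set of points of E, q ∈ E, and k a natural number. Let Z = Z_k(q, F) be the influence zone, i.e. the set of points x of E whose closer-facility count (the number of elements a ∈ F with a ≠ q and dist(x, a) < dist(x, q)) is strictly less than k. Then Z is star-shaped with respect to q: for every u ∈ Z, the segment from q to u is contained in Z. -/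
open scoped Classical

/-- The influence zone `Z_k(q, F)`: points whose closer-facility count (number of
`a ∈ F`, `a ≠ q`, strictly closer than `q`) is less than `k`. -/
def infZone {E : Type*} [MetricSpace E] (F : Finset E) (q : E) (k : ℕ) : Set E :=
  {x | (F.filter fun a => a ≠ q ∧ dist x a < dist x q).card < k}

theorem dist_lt_dist_of_dist_add_dist_eq {E : Type*} [PseudoMetricSpace E] {q u x a : E}
    (hbetween : dist q x + dist x u = dist q u) (hcloser : dist x a < dist x q) :
    dist u a < dist u q :=
  calc dist u a ≤ dist u x + dist x a := dist_triangle _ _ _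
    _ < dist u x + dist x q := by gcongr
    _ = dist u q := by rw [dist_comm u x, dist_comm x q, dist_comm u q, add_comm, hbetween]

theorem filter_closer_subset_of_mem_segment {E : Type*} [SeminormedAddCommGroup E]
    [NormedSpace ℝ E] (F : Finset E) {q u x : E} (hx : x ∈ segment ℝ q u) :
    F.filter (fun a => a ≠ q ∧ dist x a < dist x q) ⊆
      F.filter (fun a => a ≠ q ∧ dist u a < dist u q) := by
  intro a ha
  simp only [Finset.mem_filter] at ha ⊢
  obtain ⟨haF, haq, hcloser⟩ := ha
  exact ⟨haF, haq, dist_lt_dist_of_dist_add_dist_eq (dist_add_dist_of_mem_segment hx) hcloser⟩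

/-- The influence zone is star-shaped with respect to the query point `q`. -/
theorem stmt_9 {E : Type*} [NormedAddCommGroup E] [NormedSpace ℝ E]
    (F : Finset E) (q : E) (k : ℕ) :
    ∀ u ∈ infZone F q k, segment ℝ q u ⊆ infZone F q k :=
  fun _ hu _ hx => (Finset.card_le_card (filter_closer_subset_of_mem_segment F hx)).trans_lt hu
end

section
/- Let V be a real inner product space, let q, f ∈ V with f ≠ q, let d ∈ V with ‖d‖ = 1, and let 0 ≤ r ≤ r'. Set p = q + r • d and p' = q + r' • d. If dist(p, f) < dist(p, q), then dist(p', f) < dist(p', q). -/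
/-! Expanding `‖(p - q) - (f - q)‖²` shows that `p` is strictly closer to `f` than to `q` exactly
when `‖f - q‖² < 2 ⟪p - q, f - q⟫`. On the ray `p = q + s • d` the right-hand side is linear in
`s` and the left-hand side is a nonnegative constant, so once the inequality holds at some
`s = r ≥ 0` the slope `⟪d, f - q⟫` is positive and the inequality persists for all `s ≥ r`. -/

open RealInnerProductSpace

theorem dist_lt_dist_iff_norm_sq_lt_two_inner {V : Type*} [NormedAddCommGroup V]
    [InnerProductSpace ℝ V] (p f q : V) :
    dist p f < dist p q ↔ ‖f - q‖ ^ 2 < 2 * ⟪p - q, f - q⟫ := by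
  rw [← sq_lt_sq₀ dist_nonneg dist_nonneg, dist_eq_norm, dist_eq_norm,
    ← sub_sub_sub_cancel_right p f q, norm_sub_sq_real]
  constructor <;> intro h <;> linarith

theorem stmt_12_general {V : Type*} [NormedAddCommGroup V] [InnerProductSpace ℝ V]
    (q f : V) (d : V) (r r' : ℝ)
    (hr : 0 ≤ r) (hrr' : r ≤ r')
    (h : dist (q + r • d) f < dist (q + r • d) q) :
    dist (q + r' • d) f < dist (q + r' • d) q := by
  rw [dist_lt_dist_iff_norm_sq_lt_two_inner] at h ⊢
  simp only [add_sub_cancel_left, real_inner_smul_left] at h ⊢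
  have hslope : 0 < ⟪d, f - q⟫ :=
    pos_of_mul_pos_right (by linarith [sq_nonneg ‖f - q‖]) hr
  linarith [mul_le_mul_of_nonneg_right hrr' hslope.le]

/-- SLICE upper-arc property: along a ray from the query `q`, once a point is strictly
closer to a competing facility `f` than to `q`, so is every farther point on the ray. -/
theorem stmt_12 {V : Type*} [NormedAddCommGroup V] [InnerProductSpace ℝ V]
    (q f : V) (hfq : f ≠ q) (d : V) (hd : ‖d‖ = 1) (r r' : ℝ)
    (hr : 0 ≤ r) (hrr' : r ≤ r')
    (h : dist (q + r • d) f < dist (q + r • d) q) :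
    dist (q + r' • d) f < dist (q + r' • d) q :=
  stmt_12_general q f d r r' hr hrr' h
end

section
/- Let V be a real inner product space, let q, f ∈ V, let d ∈ V with ‖d‖ = 1, and let 0 ≤ r' ≤ r. Set p = q + r • d and p' = q + r' • d. If dist(p, f) ≥ dist(p, q), then dist(p', f) ≥ dist(p', q). -/
/-!
The points at least as far from `f` as from `q` form a closed half-space (bounded by the
perpendicular bisector of `q f`), hence a convex set. It contains `q` and, by hypothesis,
`q + r • d`, so it contains the whole segment between them, in particular `q + r' • d`.
-/

open RealInnerProductSpace

section HalfSpace

variable {V : Type*} [NormedAddCommGroup V] [InnerProductSpace ℝ V]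

theorem dist_le_dist_iff_inner_le (x a b : V) :
    dist x a ≤ dist x b ↔ ⟪b - a, x⟫ ≤ (‖b‖ ^ 2 - ‖a‖ ^ 2) / 2 := by
  rw [dist_eq_norm, dist_eq_norm, ← sq_le_sq₀ (norm_nonneg _) (norm_nonneg _),
    norm_sub_sq_real, norm_sub_sq_real, inner_sub_left, real_inner_comm a, real_inner_comm b]
  constructor <;> intro h <;> linarith

theorem convex_setOf_dist_le_dist (a b : V) : Convex ℝ {x | dist x a ≤ dist x b} := by
  simp_rw [dist_le_dist_iff_inner_le]
  exact convex_halfSpace_le (innerₛₗ ℝ (b - a)).isLinear _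

end HalfSpace

theorem Convex.add_smul_mem_of_le {E : Type*} [AddCommGroup E] [Module ℝ E] {s : Set E}
    (hs : Convex ℝ s) {x d : E} {r r' : ℝ} (hx : x ∈ s) (hr : x + r • d ∈ s)
    (hr' : 0 ≤ r') (hrr' : r' ≤ r) : x + r' • d ∈ s := by
  have hline : ⇑(AffineMap.lineMap x (x + d) : ℝ →ᵃ[ℝ] E) = fun t => x + t • d := by
    ext t
    simp [AffineMap.lineMap_apply_module', add_comm]
  have hray : Convex ℝ ((fun t : ℝ => x + t • d) ⁻¹' s) := hline ▸ hs.affine_preimage _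
  exact hray.ordConnected.out (by simpa using hx) hr ⟨hr', hrr'⟩

theorem stmt_13_general {V : Type*} [NormedAddCommGroup V] [InnerProductSpace ℝ V]
    (q f : V) (d : V) (r r' : ℝ)
    (hr' : 0 ≤ r') (hrr' : r' ≤ r)
    (h : dist (q + r • d) q ≤ dist (q + r • d) f) :
    dist (q + r' • d) q ≤ dist (q + r' • d) f := by
  have hq : q ∈ {x | dist x q ≤ dist x f} := by simp
  exact (convex_setOf_dist_le_dist q f).add_smul_mem_of_le hq h hr' hrr'

/-- SLICE lower-arc property: along a ray from the query `q`, if a point is not strictly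
closer to a competing facility `f` than to `q`, neither is any point nearer to `q`. -/
theorem stmt_13 {V : Type*} [NormedAddCommGroup V] [InnerProductSpace ℝ V]
    (q f : V) (d : V) (hd : ‖d‖ = 1) (r r' : ℝ)
    (hr' : 0 ≤ r') (hrr' : r' ≤ r)
    (h : dist (q + r • d) q ≤ dist (q + r • d) f) :
    dist (q + r' • d) q ≤ dist (q + r' • d) f :=
  stmt_13_general q f d r r' hr' hrr' h
end
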